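/- Let ℏ, m, g > 0. Let ψ = (ψ⁽¹⁾, ψ⁽²⁾) and φ = (φ⁽¹⁾, φ⁽²⁾) with ψ⁽¹⁾, φ⁽¹⁾ : ℝ → ℂ and ψ⁽²⁾, φ⁽²⁾ : ℝ × [0,∞) → ℂ smooth (smooth up to the boundary y = 0) and compactly supported, and suppose both satisfy the interior–boundary condition ψ⁽²⁾(x,0) = −(2mg/ℏ²) ψ⁽¹⁾(x) for all x ∈ ℝ. Define (Hψ)⁽¹⁾(x) = −(ℏ²/2m) ∂²ₓ ψ⁽¹⁾(x) + g ∂_y ψ⁽²⁾(x,0) and (Hψ)⁽²⁾(x,y) = −(ℏ²/2m)(∂²ₓ + ∂²_y) ψ⁽²⁾(x,y), and likewise for φ. Then ∫_ℝ ψ⁽¹⁾(x)* (Hφ)⁽¹⁾(x) dx + ∫_ℝ∫_0^∞ ψ⁽²⁾(x,y)* (Hφ)⁽²⁾(x,y) dy dx = ∫_ℝ (Hψ)⁽¹⁾(x)* φ⁽¹⁾(x) dx + ∫_ℝ∫_0^∞ (Hψ)⁽²⁾(x,y)* φ⁽²⁾(x,y) dy dx; that is, H is symmetric on functions satisfying the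 interior–boundary condition. -/

import Mathlib

open Complex MeasureTheory Set Filter
open scoped ContDiff

noncomputable def pdx (F : ℝ × ℝ → ℂ) : ℝ × ℝ → ℂ := fun p => fderiv ℝ F p (1, 0)
noncomputable def pdy (F : ℝ × ℝ → ℂ) : ℝ × ℝ → ℂ := fun p => fderiv ℝ F p (0, 1)

variable {F : ℝ × ℝ → ℂ}

lemma hasDerivAt_slice_x (hF : ContDiff ℝ ∞ F) (x y : ℝ) :
    HasDerivAt (fun u => F (u, y)) (pdx F (x, y)) x := by
  have h1 : HasDerivAt (fun u : ℝ => (u, y)) ((1 : ℝ), (0 : ℝ)) x :=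
    (hasDerivAt_id x).prodMk (hasDerivAt_const x y)
  exact ((hF.differentiable (by norm_num) (x, y)).hasFDerivAt).comp_hasDerivAt x h1

lemma hasDerivAt_slice_y (hF : ContDiff ℝ ∞ F) (x y : ℝ) :
    HasDerivAt (fun v => F (x, v)) (pdy F (x, y)) y := by
  have h1 : HasDerivAt (fun v : ℝ => (x, v)) ((0 : ℝ), (1 : ℝ)) y :=
    (hasDerivAt_const y x).prodMk (hasDerivAt_id y)
  exact ((hF.differentiable (by norm_num) (x, y)).hasFDerivAt).comp_hasDerivAt y h1

lemma deriv_slice_x (hF : ContDiff ℝ ∞ F) (y : ℝ) :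
    deriv (fun u => F (u, y)) = fun x => pdx F (x, y) :=
  funext fun x => (hasDerivAt_slice_x hF x y).deriv

lemma deriv_slice_y (hF : ContDiff ℝ ∞ F) (x : ℝ) :
    deriv (fun v => F (x, v)) = fun y => pdy F (x, y) :=
  funext fun y => (hasDerivAt_slice_y hF x y).deriv

lemma contDiff_pdx (hF : ContDiff ℝ ∞ F) : ContDiff ℝ ∞ (pdx F) :=
  (hF.fderiv_right (by norm_num)).clm_apply contDiff_const

lemma contDiff_pdy (hF : ContDiff ℝ ∞ F) : ContDiff ℝ ∞ (pdy F) :=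
  (hF.fderiv_right (by norm_num)).clm_apply contDiff_const

lemma hcs_pdx (hFc : HasCompactSupport F) : HasCompactSupport (pdx F) := by
  refine HasCompactSupport.intro hFc (fun p hp => ?_)
  rw [pdx, fderiv_of_notMem_tsupport (𝕜 := ℝ) hp]; rfl

lemma hcs_pdy (hFc : HasCompactSupport F) : HasCompactSupport (pdy F) := by
  refine HasCompactSupport.intro hFc (fun p hp => ?_)
  rw [pdy, fderiv_of_notMem_tsupport (𝕜 := ℝ) hp]; rfl

lemma contDiff_slice_x (hF : ContDiff ℝ ∞ F) (y : ℝ) : ContDiff ℝ ∞ (fun u => F (u, y)) :=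
  hF.comp (contDiff_id.prodMk contDiff_const)

lemma contDiff_slice_y (hF : ContDiff ℝ ∞ F) (x : ℝ) : ContDiff ℝ ∞ (fun v => F (x, v)) :=
  hF.comp (contDiff_const.prodMk contDiff_id)

lemma hcs_slice_x (hFc : HasCompactSupport F) (y : ℝ) :
    HasCompactSupport (fun u => F (u, y)) := by
  refine HasCompactSupport.intro (hFc.image continuous_fst) (fun x hx => ?_)
  by_contra h
  exact hx ⟨(x, y), subset_closure h, rfl⟩

lemma hcs_slice_y (hFc : HasCompactSupport F) (x : ℝ) :
    HasCompactSupport (fun v => F (x, v)) := by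
  refine HasCompactSupport.intro (hFc.image continuous_snd) (fun y hy => ?_)
  by_contra h
  exact hy ⟨(x, y), subset_closure h, rfl⟩

lemma contDiff_star {f : ℝ → ℂ} (hf : ContDiff ℝ ∞ f) :
    ContDiff ℝ ∞ (fun x => star (f x)) :=
  Complex.conjCLE.toContinuousLinearMap.contDiff.comp hf

lemma hcs_star {f : ℝ → ℂ} (hf : HasCompactSupport f) :
    HasCompactSupport (fun x => star (f x)) :=
  hf.comp_left (star_zero ℂ)


open Complex MeasureTheory Set Filter
open scoped ContDiff

-- integrability of continuous compactly supported
lemma intCS {f : ℝ → ℂ} (hf : Continuous f) (hfc : HasCompactSupport f) : Integrable f :=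
  hf.integrable_of_hasCompactSupport hfc

lemma tendsto_zero_atTop_cs {f : ℝ → ℂ} (hfc : HasCompactSupport f) :
    Tendsto f atTop (nhds 0) := by
  rw [hasCompactSupport_iff_eventuallyEq, Filter.coclosedCompact_eq_cocompact] at hfc
  exact hfc.filter_mono atTop_le_cocompact |>.tendsto


lemma cdD {f : ℝ → ℂ} (hf : ContDiff ℝ ∞ f) : ContDiff ℝ ∞ (deriv f) :=
  (contDiff_infty_iff_deriv.mp hf).2

/-- single integration by parts on the line -/
lemma ibp_line {f g : ℝ → ℂ} (hf : ContDiff ℝ ∞ f) (hg : ContDiff ℝ ∞ g)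
    (hfc : HasCompactSupport f) (hgc : HasCompactSupport g) :
    ∫ x, f x * deriv g x = - ∫ x, deriv f x * g x := by
  refine integral_mul_deriv_eq_deriv_mul_of_integrable
    (fun x _ => (hf.differentiable (by norm_num) x).hasDerivAt)
    (fun x _ => (hg.differentiable (by norm_num) x).hasDerivAt) ?_ ?_ ?_
  · exact intCS (hf.continuous.mul (hg.continuous_deriv (by norm_num))) (hfc.mul_right)
  · exact intCS ((hf.continuous_deriv (by norm_num)).mul hg.continuous) (hgc.mul_left)
  · exact intCS (hf.continuous.mul hg.continuous) (hfc.mul_right)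

lemma ibp2_line {f g : ℝ → ℂ} (hf : ContDiff ℝ ∞ f) (hg : ContDiff ℝ ∞ g)
    (hfc : HasCompactSupport f) (hgc : HasCompactSupport g) :
    ∫ x, f x * deriv (deriv g) x = ∫ x, deriv (deriv f) x * g x := by
  rw [ibp_line hf ((cdD hg)) hfc (hgc.deriv)]
  have h2 : ∫ x, deriv f x * deriv g x = - ∫ x, deriv (deriv f) x * g x :=
    ibp_line ((cdD hf)) hg (hfc.deriv) hgc
  rw [h2, neg_neg]

/-- single integration by parts on the half line -/
lemma ibp_Ioi {f g : ℝ → ℂ} (hf : ContDiff ℝ ∞ f) (hg : ContDiff ℝ ∞ g)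
    (hfc : HasCompactSupport f) (hgc : HasCompactSupport g) :
    ∫ y in Ioi (0:ℝ), f y * deriv g y
      = - (f 0 * g 0) - ∫ y in Ioi (0:ℝ), deriv f y * g y := by
  have := integral_Ioi_mul_deriv_eq_deriv_mul (a := (0:ℝ))
    (u := f) (v := g) (u' := deriv f) (v' := deriv g)
    (a' := f 0 * g 0) (b' := 0)
    (fun x _ => (hf.differentiable (by norm_num) x).hasDerivAt)
    (fun x _ => (hg.differentiable (by norm_num) x).hasDerivAt)
    ((intCS (hf.continuous.mul (hg.continuous_deriv (by norm_num))) hfc.mul_right).integrableOn)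
    ((intCS ((hf.continuous_deriv (by norm_num)).mul hg.continuous) hgc.mul_left).integrableOn)
    (((hf.continuous.mul hg.continuous).tendsto 0).mono_left nhdsWithin_le_nhds)
    (tendsto_zero_atTop_cs (f := fun x => f x * g x) hfc.mul_right)
  simpa using this

lemma ibp2_Ioi {f g : ℝ → ℂ} (hf : ContDiff ℝ ∞ f) (hg : ContDiff ℝ ∞ g)
    (hfc : HasCompactSupport f) (hgc : HasCompactSupport g) :
    ∫ y in Ioi (0:ℝ), f y * deriv (deriv g) y
      = - (f 0 * deriv g 0) + deriv f 0 * g 0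
        + ∫ y in Ioi (0:ℝ), deriv (deriv f) y * g y := by
  rw [ibp_Ioi hf (cdD hg) hfc hgc.deriv, ibp_Ioi (cdD hf) hg hfc.deriv hgc]
  ring


open Complex MeasureTheory Set Filter
open scoped ContDiff

variable {H : ℝ × ℝ → ℂ}

lemma int_prod (hH : Continuous H) (hHc : HasCompactSupport H) :
    Integrable H ((volume : Measure ℝ).prod (volume.restrict (Ioi (0:ℝ)))) := by
  have h1 : Integrable H (volume : Measure (ℝ × ℝ)) :=
    hH.integrable_of_hasCompactSupport hHc
  have h2 : (volume : Measure ℝ).prod (volume.restrict (Ioi (0:ℝ)))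
      = ((volume : Measure ℝ).prod volume).restrict (univ ×ˢ Ioi (0:ℝ)) := by
    rw [← Measure.prod_restrict, Measure.restrict_univ]
  rw [h2, ← MeasureTheory.Measure.volume_eq_prod]
  exact h1.restrict

lemma int_param (hH : Continuous H) (hHc : HasCompactSupport H) :
    Integrable (fun x => ∫ y in Ioi (0:ℝ), H (x, y)) (volume : Measure ℝ) :=
  (int_prod hH hHc).integral_prod_left

lemma swap_int (hH : Continuous H) (hHc : HasCompactSupport H) :
    ∫ x, ∫ y in Ioi (0:ℝ), H (x, y) = ∫ y in Ioi (0:ℝ), ∫ x, H (x, y) :=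
  integral_integral_swap (f := fun x y => H (x, y)) (int_prod hH hHc)


/-- **Symmetry of the toy IBC Hamiltonian (Dirichlet-type IBC).**
On wave functions `ψ = (ψ¹, ψ²)` on `ℝ ⊔ (ℝ × [0,∞))` that are smooth (up to the
boundary `y = 0`, formalized by smoothness on all of `ℝ²`), compactly supported,
and satisfy the interior–boundary condition `ψ²(x,0) = −(2mg/ℏ²) ψ¹(x)`, the operator
`(Hψ)¹(x) = −(ℏ²/2m) ∂²ₓ ψ¹(x) + g ∂_y ψ²(x,0)`,
`(Hψ)²(x,y) = −(ℏ²/2m)(∂²ₓ + ∂²_y) ψ²(x,y)` is symmetric with respect to the inner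
product of `L²(ℝ) ⊕ L²(ℝ × [0,∞))`. -/
theorem toy_IBC_hamiltonian_symmetric_dirichlet
    (ℏ m g : ℝ) (hℏ : 0 < ℏ) (hm : 0 < m) (hg : 0 < g)
    (ψ1 φ1 : ℝ → ℂ) (ψ2 φ2 : ℝ → ℝ → ℂ)
    (hψ1 : ContDiff ℝ (⊤ : ℕ∞) ψ1) (hφ1 : ContDiff ℝ (⊤ : ℕ∞) φ1)
    (hψ2 : ContDiff ℝ (⊤ : ℕ∞) (fun p : ℝ × ℝ => ψ2 p.1 p.2))
    (hφ2 : ContDiff ℝ (⊤ : ℕ∞) (fun p : ℝ × ℝ => φ2 p.1 p.2))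
    (hψ1c : HasCompactSupport ψ1) (hφ1c : HasCompactSupport φ1)
    (hψ2c : HasCompactSupport (fun p : ℝ × ℝ => ψ2 p.1 p.2))
    (hφ2c : HasCompactSupport (fun p : ℝ × ℝ => φ2 p.1 p.2))
    -- interior–boundary condition for ψ and for φ
    (hIBCψ : ∀ x : ℝ, ψ2 x 0 = -(2 * m * g / ℏ ^ 2 : ℝ) * ψ1 x)
    (hIBCφ : ∀ x : ℝ, φ2 x 0 = -(2 * m * g / ℏ ^ 2 : ℝ) * φ1 x) :
    -- ⟨ψ, Hφ⟩ = ⟨Hψ, φ⟩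
    ((∫ x : ℝ, (starRingEnd ℂ) (ψ1 x) *
        (-((ℏ : ℂ) ^ 2 / (2 * (m : ℂ))) * deriv (deriv φ1) x
          + (g : ℂ) * deriv (fun v => φ2 x v) 0))
      + ∫ x : ℝ, ∫ y in Set.Ioi (0 : ℝ), (starRingEnd ℂ) (ψ2 x y) *
          (-((ℏ : ℂ) ^ 2 / (2 * (m : ℂ)))
            * (deriv (deriv (fun u => φ2 u y)) x + deriv (deriv (fun v => φ2 x v)) y)))
    = ((∫ x : ℝ, (starRingEnd ℂ)
          (-((ℏ : ℂ) ^ 2 / (2 * (m : ℂ))) * deriv (deriv ψ1) x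
            + (g : ℂ) * deriv (fun v => ψ2 x v) 0) * φ1 x)
      + ∫ x : ℝ, ∫ y in Set.Ioi (0 : ℝ), (starRingEnd ℂ)
          (-((ℏ : ℂ) ^ 2 / (2 * (m : ℂ)))
            * (deriv (deriv (fun u => ψ2 u y)) x + deriv (deriv (fun v => ψ2 x v)) y))
          * φ2 x y) := by

  have hψ1' : ContDiff ℝ ∞ ψ1 := hψ1.of_le (by simp)
  have hφ1' : ContDiff ℝ ∞ φ1 := hφ1.of_le (by simp)
  set F : ℝ × ℝ → ℂ := fun p => ψ2 p.1 p.2 with hFdef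
  set G : ℝ × ℝ → ℂ := fun p => φ2 p.1 p.2 with hGdef
  have hψ2' : ContDiff ℝ ∞ F := hψ2.of_le (by simp)
  have hφ2' : ContDiff ℝ ∞ G := hφ2.of_le (by simp)
  set c : ℂ := ((ℏ : ℂ) ^ 2 / (2 * (m : ℂ))) with hc
  set kc : ℂ := ((2 * m * g / ℏ ^ 2 : ℝ) : ℂ) with hk
  -- scalar facts
  have hsc : star c = c := by
    rw [hc, Complex.star_def]
    simp [map_div₀, Complex.conj_ofReal, map_ofNat]
  have hsg : star ((g : ℝ) : ℂ) = ((g : ℝ) : ℂ) := by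
    rw [Complex.star_def, Complex.conj_ofReal]
  have hsk : star kc = kc := by rw [hk, Complex.star_def, Complex.conj_ofReal]
  have hckg : c * kc = (g : ℂ) := by
    have h1 : (ℏ : ℂ) ≠ 0 := Complex.ofReal_ne_zero.mpr hℏ.ne'
    have h2 : (m : ℂ) ≠ 0 := Complex.ofReal_ne_zero.mpr hm.ne'
    rw [hc, hk]
    push_cast
    field_simp
  -- rewriting derivatives as partial derivatives
  have e2xφ : ∀ x y : ℝ, deriv (deriv (fun u => φ2 u y)) x = pdx (pdx G) (x, y) := by
    intro x y
    have h1 : deriv (fun u => φ2 u y) = fun u => pdx G (u, y) := deriv_slice_x hφ2' y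
    rw [h1]
    exact congrFun (deriv_slice_x (contDiff_pdx hφ2') y) x
  have e2yφ : ∀ x y : ℝ, deriv (deriv (fun v => φ2 x v)) y = pdy (pdy G) (x, y) := by
    intro x y
    have h1 : deriv (fun v => φ2 x v) = fun v => pdy G (x, v) := deriv_slice_y hφ2' x
    rw [h1]
    exact congrFun (deriv_slice_y (contDiff_pdy hφ2') x) y
  have e2xψ : ∀ x y : ℝ, deriv (deriv (fun u => ψ2 u y)) x = pdx (pdx F) (x, y) := by
    intro x y
    have h1 : deriv (fun u => ψ2 u y) = fun u => pdx F (u, y) := deriv_slice_x hψ2' y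
    rw [h1]
    exact congrFun (deriv_slice_x (contDiff_pdx hψ2') y) x
  have e2yψ : ∀ x y : ℝ, deriv (deriv (fun v => ψ2 x v)) y = pdy (pdy F) (x, y) := by
    intro x y
    have h1 : deriv (fun v => ψ2 x v) = fun v => pdy F (x, v) := deriv_slice_y hψ2' x
    rw [h1]
    exact congrFun (deriv_slice_y (contDiff_pdy hψ2') x) y
  have e1yφ : ∀ x : ℝ, deriv (fun v => φ2 x v) 0 = pdy G (x, 0) := fun x =>
    congrFun (deriv_slice_y hφ2' x) 0
  have e1yψ : ∀ x : ℝ, deriv (fun v => ψ2 x v) 0 = pdy F (x, 0) := fun x =>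
    congrFun (deriv_slice_y hψ2' x) 0
  simp only [starRingEnd_apply, e2xφ, e2yφ, e2xψ, e2yψ, e1yφ, e1yψ]
  -- continuity and support facts
  have cF : Continuous F := hψ2'.continuous
  have cG : Continuous G := hφ2'.continuous
  have cPxxG : Continuous (pdx (pdx G)) := (contDiff_pdx (contDiff_pdx hφ2')).continuous
  have cPyyG : Continuous (pdy (pdy G)) := (contDiff_pdy (contDiff_pdy hφ2')).continuous
  have cPxxF : Continuous (pdx (pdx F)) := (contDiff_pdx (contDiff_pdx hψ2')).continuous
  have cPyyF : Continuous (pdy (pdy F)) := (contDiff_pdy (contDiff_pdy hψ2')).continuous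
  have csF : Continuous (fun p : ℝ × ℝ => star (F p)) := continuous_star.comp cF
  have ssF : HasCompactSupport (fun p : ℝ × ℝ => star (F p)) := hψ2c.comp_left (star_zero ℂ)
  -- the four product functions on ℝ²
  have cP1 : Continuous (fun p : ℝ × ℝ => star (F p) * pdx (pdx G) p) := csF.mul cPxxG
  have sP1 : HasCompactSupport (fun p : ℝ × ℝ => star (F p) * pdx (pdx G) p) := ssF.mul_right
  have cP2 : Continuous (fun p : ℝ × ℝ => star (F p) * pdy (pdy G) p) := csF.mul cPyyG
  have sP2 : HasCompactSupport (fun p : ℝ × ℝ => star (F p) * pdy (pdy G) p) := ssF.mul_right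
  have cQ1 : Continuous (fun p : ℝ × ℝ => star (pdx (pdx F) p) * G p) :=
    (continuous_star.comp cPxxF).mul cG
  have sQ1 : HasCompactSupport (fun p : ℝ × ℝ => star (pdx (pdx F) p) * G p) := hφ2c.mul_left
  have cQ2 : Continuous (fun p : ℝ × ℝ => star (pdy (pdy F) p) * G p) :=
    (continuous_star.comp cPyyF).mul cG
  have sQ2 : HasCompactSupport (fun p : ℝ × ℝ => star (pdy (pdy F) p) * G p) := hφ2c.mul_left
  -- x-part: double integration by parts on the line
  have hA : (∫ x, star (ψ1 x) * deriv (deriv φ1) x) = ∫ x, star (deriv (deriv ψ1) x) * φ1 x := by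
    rw [ibp2_line (contDiff_star hψ1') hφ1' (hcs_star hψ1c) hφ1c]
    have hd : deriv (deriv (fun x => star (ψ1 x))) = fun x => star (deriv (deriv ψ1) x) := by
      rw [deriv.star']
      exact deriv.star'
    rw [hd]
  -- x-part of the half-plane: Fubini + double integration by parts in x
  have hB : (∫ x, ∫ y in Ioi (0:ℝ), star (ψ2 x y) * pdx (pdx G) (x, y))
      = ∫ x, ∫ y in Ioi (0:ℝ), star (pdx (pdx F) (x, y)) * φ2 x y := by
    calc (∫ x, ∫ y in Ioi (0:ℝ), star (ψ2 x y) * pdx (pdx G) (x, y))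
        = ∫ y in Ioi (0:ℝ), ∫ x, star (ψ2 x y) * pdx (pdx G) (x, y) := swap_int cP1 sP1
      _ = ∫ y in Ioi (0:ℝ), ∫ x, star (pdx (pdx F) (x, y)) * φ2 x y := by
          refine integral_congr_ae (Eventually.of_forall fun y => ?_)
          have hibp := ibp2_line (f := fun u => star (ψ2 u y)) (g := fun u => φ2 u y)
            (contDiff_star (contDiff_slice_x hψ2' y)) (contDiff_slice_x hφ2' y)
            (hcs_star (hcs_slice_x hψ2c y)) (hcs_slice_x hφ2c y)
          have hd : deriv (deriv (fun u => star (ψ2 u y))) = fun x => star (pdx (pdx F) (x, y)) := by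
            have h1 : deriv (fun u => star (ψ2 u y)) = fun x => star (pdx F (x, y)) := by
              rw [deriv.star', deriv_slice_x hψ2' y]
            rw [h1, deriv.star', deriv_slice_x (contDiff_pdx hψ2') y]
          simp only [e2xφ, hd] at hibp
          exact hibp
      _ = ∫ x, ∫ y in Ioi (0:ℝ), star (pdx (pdx F) (x, y)) * φ2 x y := (swap_int cQ1 sQ1).symm
  -- y-part: double integration by parts on the half line, with boundary terms
  have hC : (∫ x, ∫ y in Ioi (0:ℝ), star (ψ2 x y) * pdy (pdy G) (x, y))
      = (∫ x, (-(star (ψ2 x 0) * pdy G (x, 0)) + star (pdy F (x, 0)) * φ2 x 0))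
        + ∫ x, ∫ y in Ioi (0:ℝ), star (pdy (pdy F) (x, y)) * φ2 x y := by
    have key : ∀ x : ℝ, (∫ y in Ioi (0:ℝ), star (ψ2 x y) * pdy (pdy G) (x, y))
        = (-(star (ψ2 x 0) * pdy G (x, 0)) + star (pdy F (x, 0)) * φ2 x 0)
          + ∫ y in Ioi (0:ℝ), star (pdy (pdy F) (x, y)) * φ2 x y := by
      intro x
      have hibp := ibp2_Ioi (f := fun v => star (ψ2 x v)) (g := fun v => φ2 x v)
        (contDiff_star (contDiff_slice_y hψ2' x)) (contDiff_slice_y hφ2' x)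
        (hcs_star (hcs_slice_y hψ2c x)) (hcs_slice_y hφ2c x)
      have hd1 : deriv (fun v => star (ψ2 x v)) = fun y => star (pdy F (x, y)) := by
        rw [deriv.star', deriv_slice_y hψ2' x]
      have hd2' : deriv (fun y => star (pdy F (x, y))) = fun y => star (pdy (pdy F) (x, y)) := by
        rw [deriv.star', deriv_slice_y (contDiff_pdy hψ2') x]
      simp only [e2yφ, e1yφ, hd1, hd2'] at hibp
      rw [hibp]
    rw [integral_congr_ae (Eventually.of_forall key)]
    refine integral_add ?_ ?_
    · refine Integrable.add (Integrable.neg ?_) ?_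
      · exact intCS ((continuous_star.comp (contDiff_slice_x hψ2' 0).continuous).mul
          (contDiff_slice_x (contDiff_pdy hφ2') 0).continuous)
          ((hcs_star (hcs_slice_x hψ2c 0)).mul_right)
      · exact intCS ((continuous_star.comp (contDiff_slice_x (contDiff_pdy hψ2') 0).continuous).mul
          (contDiff_slice_x hφ2' 0).continuous)
          ((hcs_slice_x hφ2c 0).mul_left)
    · exact int_param cQ2 sQ2
  -- boundary terms via the interior–boundary condition
  have hbd : (∫ x, (-(star (ψ2 x 0) * pdy G (x, 0)) + star (pdy F (x, 0)) * φ2 x 0))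
      = kc * (∫ x, star (ψ1 x) * pdy G (x, 0)) - kc * ∫ x, star (pdy F (x, 0)) * φ1 x := by
    have hpt : ∀ x : ℝ, -(star (ψ2 x 0) * pdy G (x, 0)) + star (pdy F (x, 0)) * φ2 x 0
        = kc * (star (ψ1 x) * pdy G (x, 0)) - kc * (star (pdy F (x, 0)) * φ1 x) := by
      intro x
      rw [hIBCψ x, hIBCφ x]
      simp only [star_mul', star_neg, hsk]
      ring
    rw [integral_congr_ae (Eventually.of_forall hpt)]
    refine integral_sub (Integrable.const_mul ?_ _) (Integrable.const_mul ?_ _) |>.trans ?_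
    · exact intCS ((continuous_star.comp hψ1'.continuous).mul
        (contDiff_slice_x (contDiff_pdy hφ2') 0).continuous) ((hcs_star hψ1c).mul_right)
    · exact intCS ((continuous_star.comp (contDiff_slice_x (contDiff_pdy hψ2') 0).continuous).mul
        hφ1'.continuous) (hφ1c.mul_left)
    · rw [MeasureTheory.integral_const_mul, MeasureTheory.integral_const_mul]
  -- splitting the four goal integrals
  have split1 : (∫ x, star (ψ1 x) * (-c * deriv (deriv φ1) x + (g:ℝ) * pdy G (x, 0)))
      = -c * (∫ x, star (ψ1 x) * deriv (deriv φ1) x)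
        + (g:ℝ) * ∫ x, star (ψ1 x) * pdy G (x, 0) := by
    rw [show (fun x => star (ψ1 x) * (-c * deriv (deriv φ1) x + (g:ℝ) * pdy G (x, 0)))
        = fun x => -c * (star (ψ1 x) * deriv (deriv φ1) x)
            + (g:ℝ) * (star (ψ1 x) * pdy G (x, 0)) from funext fun x => by ring]
    refine (integral_add (Integrable.const_mul ?_ _) (Integrable.const_mul ?_ _)).trans ?_
    rotate_right
    rw [MeasureTheory.integral_const_mul, MeasureTheory.integral_const_mul]
    · exact intCS ((continuous_star.comp hψ1'.continuous).mul
        ((cdD hφ1').continuous_deriv (by norm_num))) ((hcs_star hψ1c).mul_right)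
    · exact intCS ((continuous_star.comp hψ1'.continuous).mul
        (contDiff_slice_x (contDiff_pdy hφ2') 0).continuous) ((hcs_star hψ1c).mul_right)
  have split3 : (∫ x, star (-c * deriv (deriv ψ1) x + (g:ℝ) * pdy F (x, 0)) * φ1 x)
      = -c * (∫ x, star (deriv (deriv ψ1) x) * φ1 x)
        + (g:ℝ) * ∫ x, star (pdy F (x, 0)) * φ1 x := by
    rw [show (fun x => star (-c * deriv (deriv ψ1) x + (g:ℝ) * pdy F (x, 0)) * φ1 x)
        = fun x => -c * (star (deriv (deriv ψ1) x) * φ1 x)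
            + (g:ℝ) * (star (pdy F (x, 0)) * φ1 x) from funext fun x => by
          simp only [star_add, star_mul', star_neg, hsc, hsg]; ring]
    refine (integral_add (Integrable.const_mul ?_ _) (Integrable.const_mul ?_ _)).trans ?_
    rotate_right
    rw [MeasureTheory.integral_const_mul, MeasureTheory.integral_const_mul]
    · exact intCS ((continuous_star.comp ((cdD hψ1').continuous_deriv (by norm_num))).mul
        hφ1'.continuous) (hφ1c.mul_left)
    · exact intCS ((continuous_star.comp (contDiff_slice_x (contDiff_pdy hψ2') 0).continuous).mul
        hφ1'.continuous) (hφ1c.mul_left)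
  have split2 : (∫ x, ∫ y in Ioi (0:ℝ), star (ψ2 x y) * (-c * (pdx (pdx G) (x, y) + pdy (pdy G) (x, y))))
      = -c * (∫ x, ∫ y in Ioi (0:ℝ), star (ψ2 x y) * pdx (pdx G) (x, y))
        + -c * (∫ x, ∫ y in Ioi (0:ℝ), star (ψ2 x y) * pdy (pdy G) (x, y)) := by
    have inner : ∀ x : ℝ, (∫ y in Ioi (0:ℝ), star (ψ2 x y) * (-c * (pdx (pdx G) (x, y) + pdy (pdy G) (x, y))))
        = -c * (∫ y in Ioi (0:ℝ), star (ψ2 x y) * pdx (pdx G) (x, y))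
          + -c * (∫ y in Ioi (0:ℝ), star (ψ2 x y) * pdy (pdy G) (x, y)) := by
      intro x
      rw [show (fun y => star (ψ2 x y) * (-c * (pdx (pdx G) (x, y) + pdy (pdy G) (x, y))))
          = fun y => -c * (star (ψ2 x y) * pdx (pdx G) (x, y))
              + -c * (star (ψ2 x y) * pdy (pdy G) (x, y)) from funext fun y => by ring]
      refine (integral_add (Integrable.const_mul ?_ _) (Integrable.const_mul ?_ _)).trans ?_
      rotate_right
      rw [MeasureTheory.integral_const_mul, MeasureTheory.integral_const_mul]
      · exact (intCS (cP1.comp (continuous_const.prodMk continuous_id))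
          (hcs_slice_y sP1 x)).restrict
      · exact (intCS (cP2.comp (continuous_const.prodMk continuous_id))
          (hcs_slice_y sP2 x)).restrict
    rw [integral_congr_ae (Eventually.of_forall inner)]
    rw [integral_add (Integrable.const_mul (int_param cP1 sP1) _)
      (Integrable.const_mul (int_param cP2 sP2) _), MeasureTheory.integral_const_mul, MeasureTheory.integral_const_mul]
  have split4 : (∫ x, ∫ y in Ioi (0:ℝ), star (-c * (pdx (pdx F) (x, y) + pdy (pdy F) (x, y))) * φ2 x y)
      = -c * (∫ x, ∫ y in Ioi (0:ℝ), star (pdx (pdx F) (x, y)) * φ2 x y)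
        + -c * (∫ x, ∫ y in Ioi (0:ℝ), star (pdy (pdy F) (x, y)) * φ2 x y) := by
    have inner : ∀ x : ℝ, (∫ y in Ioi (0:ℝ), star (-c * (pdx (pdx F) (x, y) + pdy (pdy F) (x, y))) * φ2 x y)
        = -c * (∫ y in Ioi (0:ℝ), star (pdx (pdx F) (x, y)) * φ2 x y)
          + -c * (∫ y in Ioi (0:ℝ), star (pdy (pdy F) (x, y)) * φ2 x y) := by
      intro x
      rw [show (fun y => star (-c * (pdx (pdx F) (x, y) + pdy (pdy F) (x, y))) * φ2 x y)
          = fun y => -c * (star (pdx (pdx F) (x, y)) * φ2 x y)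
              + -c * (star (pdy (pdy F) (x, y)) * φ2 x y) from funext fun y => by
            simp only [star_add, star_mul', star_neg, hsc]; ring]
      refine (integral_add (Integrable.const_mul ?_ _) (Integrable.const_mul ?_ _)).trans ?_
      rotate_right
      rw [MeasureTheory.integral_const_mul, MeasureTheory.integral_const_mul]
      · exact (intCS (cQ1.comp (continuous_const.prodMk continuous_id))
          (hcs_slice_y sQ1 x)).restrict
      · exact (intCS (cQ2.comp (continuous_const.prodMk continuous_id))
          (hcs_slice_y sQ2 x)).restrict
    rw [integral_congr_ae (Eventually.of_forall inner)]
    rw [integral_add (Integrable.const_mul (int_param cQ1 sQ1) _)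
      (Integrable.const_mul (int_param cQ2 sQ2) _), MeasureTheory.integral_const_mul, MeasureTheory.integral_const_mul]
  rw [split1, split2, split3, split4, hA, hB, hC, hbd]
  linear_combination ((∫ x, star (pdy F (x, 0)) * φ1 x)
    - ∫ x, star (ψ1 x) * pdy G (x, 0)) * hckg
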